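/- arXiv:0704.2811 — 4 statements merged into one kernel-verified Lean document; each statement's English description precedes it below -/
import Mathlib

section
/- Let q be a prime power, m a positive integer, ℓ a natural number with ℓ ≤ q, and let a_1, ..., a_m be a basis of F_{q^m} over F_q. Then for every multivariate polynomial φ ∈ F_q[x_1, ..., x_m] of total degree at most ℓ there exists a univariate polynomial f ∈ F_{q^m}[X] of degree at most ℓ·q^{m−1} such that for every (x_1, ..., x_m) ∈ F_q^m, f evaluated at ∑_{j=1}^m a_j x_j equals the image of φ(x_1, ..., x_m) under the embedding F_q → F_{q^m}. -/
/-!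
Over a finite field every coordinate function of a basis of `F_{q^m}` is `y ↦ Tr(c y)` for the
trace-dual basis vector `c`, and `Tr(z) = ∑_{i < m} z ^ (q ^ i)` is a polynomial of degree
`q ^ (m - 1)`. Substituting these coordinate polynomials into `φ` gives `f`, of degree at most
`totalDegree φ * q ^ (m - 1)`.
-/

open Polynomial

namespace MvPolynomial

variable {σ R S : Type*} [CommSemiring R] [CommSemiring S] [Algebra R S]

theorem natDegree_aeval_le (p : MvPolynomial σ R) (f : σ → S[X]) {D : ℕ}
    (hf : ∀ i, (f i).natDegree ≤ D) :
    (aeval f p).natDegree ≤ p.totalDegree * D := by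
  rw [aeval_def, eval₂_eq]
  refine natDegree_sum_le_of_forall_le _ _ fun d hd => ?_
  calc (algebraMap R S[X] (p.coeff d) * ∏ i ∈ d.support, f i ^ d i).natDegree
      ≤ ∑ i ∈ d.support, (f i ^ d i).natDegree := by
        rw [Polynomial.algebraMap_apply]
        exact (natDegree_C_mul_le _ _).trans (natDegree_prod_le _ _)
    _ ≤ ∑ i ∈ d.support, d i * D :=
        Finset.sum_le_sum fun i _ => natDegree_pow_le_of_le _ (hf i)
    _ = (d.sum fun _ e => e) * D := by rw [Finsupp.sum, Finset.sum_mul]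
    _ ≤ p.totalDegree * D := Nat.mul_le_mul_right _ (le_totalDegree hd)

theorem eval_aeval (p : MvPolynomial σ R) (f : σ → S[X]) (y : S) :
    (aeval f p).eval y = aeval (fun i => (f i).eval y) p := by
  simpa using comp_aeval_apply (f := f) ((Polynomial.aeval y).restrictScalars R) p

end MvPolynomial

namespace FiniteField

variable (K : Type*) {L : Type*} [Field K] [Field L] [Algebra K L]

noncomputable def traceMulPoly (c : L) : L[X] :=
  ∑ i ∈ Finset.range (Module.finrank K L), C (c ^ Nat.card K ^ i) * X ^ Nat.card K ^ i

theorem natDegree_traceMulPoly_le [Finite K] (c : L) :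
    (traceMulPoly K c).natDegree ≤ Nat.card K ^ (Module.finrank K L - 1) := by
  refine natDegree_sum_le_of_forall_le _ _ fun i hi => ?_
  refine (natDegree_C_mul_X_pow_le _ _).trans (Nat.pow_le_pow_right Nat.card_pos ?_)
  have := Finset.mem_range.mp hi
  omega

theorem eval_traceMulPoly [Finite L] (c y : L) :
    (traceMulPoly K c).eval y = algebraMap K L (Algebra.trace K L (c * y)) := by
  simp [traceMulPoly, eval_finsetSum, algebraMap_trace_eq_sum_pow, mul_pow]

end FiniteField

open FiniteField in
theorem Module.Basis.exists_polynomial_eval_eq_repr {K L ι : Type*} [Field K] [Finite K]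
    [Field L] [Algebra K L] [Finite ι] (b : Module.Basis ι K L) (i : ι) :
    ∃ P : L[X], P.natDegree ≤ Nat.card K ^ (Module.finrank K L - 1) ∧
      ∀ y, P.eval y = algebraMap K L (b.repr y i) := by
  classical
  have := Module.Finite.of_basis b
  have : Finite L := Module.finite_of_finite K
  refine ⟨traceMulPoly K (b.traceDual i), natDegree_traceMulPoly_le K _, fun y => ?_⟩
  rw [eval_traceMulPoly, ← b.traceDual_traceDual, Module.Basis.traceDual_repr_apply,
    b.traceDual_traceDual, Algebra.traceForm_apply, mul_comm]

theorem stmt_4_general {F E : Type*} [Field F] [Fintype F] [Field E]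
    [Algebra F E] (q m ℓ : ℕ) (hq : Fintype.card F = q) (a : Module.Basis (Fin m) F E)
    (φ : MvPolynomial (Fin m) F) (hφ : φ.totalDegree ≤ ℓ) :
    ∃ f : Polynomial E, f.natDegree ≤ ℓ * q ^ (m - 1) ∧
      ∀ x : Fin m → F,
        f.eval (∑ j, (a j : E) * algebraMap F E (x j)) =
          algebraMap F E (MvPolynomial.eval x φ) := by
  choose P hPdeg hPeval using a.exists_polynomial_eval_eq_repr
  have hdeg : Nat.card F ^ (Module.finrank F E - 1) = q ^ (m - 1) := by
    rw [Nat.card_eq_fintype_card, hq, Module.finrank_eq_card_basis a, Fintype.card_fin]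
  refine ⟨MvPolynomial.aeval P φ, ?_, fun x => ?_⟩
  · rw [← hdeg]
    exact (φ.natDegree_aeval_le P hPdeg).trans (Nat.mul_le_mul_right _ hφ)
  · have hrepr : a.repr (∑ j, (a j : E) * algebraMap F E (x j)) = x := by
      simp_rw [mul_comm (a _), ← Algebra.smul_def, a.repr_sum_self]
    simp_rw [MvPolynomial.eval_aeval, hPeval, hrepr, ← MvPolynomial.coe_aeval_eq_eval]
    exact MvPolynomial.aeval_algebraMap_apply E x φ

/-- Let `q` be a prime power, `m` a positive integer, `ℓ ≤ q`
a natural number, and let `a 1, ..., a m` be a basis of `F_{q^m}` (here `E`)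
over `F_q` (here `F`).  Then for every multivariate polynomial
`φ ∈ F_q[x 1, ..., x m]` of total degree at most `ℓ` there exists a univariate
polynomial `f ∈ F_{q^m}[X]` of degree at most `ℓ * q ^ (m - 1)` such that for
every `x ∈ F_q^m`, `f` evaluated at `∑ j, a j * x j` equals the image of
`φ(x)` under the embedding `F_q → F_{q^m}`. -/
theorem stmt_4 {F E : Type*} [Field F] [Fintype F] [Field E] [Fintype E]
    [Algebra F E] (q m ℓ : ℕ) (hq : Fintype.card F = q) (hm : 0 < m)
    (hℓ : ℓ ≤ q) (hrank : Module.finrank F E = m) (a : Module.Basis (Fin m) F E)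
    (φ : MvPolynomial (Fin m) F) (hφ : φ.totalDegree ≤ ℓ) :
    ∃ f : Polynomial E, f.natDegree ≤ ℓ * q ^ (m - 1) ∧
      ∀ x : Fin m → F,
        f.eval (∑ j, (a j : E) * algebraMap F E (x j)) =
          algebraMap F E (MvPolynomial.eval x φ) :=
  stmt_4_general q m ℓ hq a φ hφ
end

section
/- Let q be a prime power, m a positive integer, ℓ ≤ q a natural number, n ≤ q^m, and let α_1, ..., α_n be distinct points of F_q^m. Fix a basis a_1, ..., a_m of F_{q^m} over F_q and set β_i = ∑_{j=1}^m a_j α_{ij} ∈ F_{q^m} for 1 ≤ i ≤ n, where α_i = (α_{i1}, ..., α_{im}); the β_i are then distinct. Then for every codeword [φ(α_1), ..., φ(α_n)] of the Reed-Muller code RM_q(ℓ, m, n), its coordinatewise image under the embedding F_q → F_{q^m} is a codeword of the Reed-Solomon code RS_{q^m}(n, ℓ·q^{m−1}) with evaluation points β_1, ..., β_n; that is, there exists f ∈ F_{q^m}[X] with deg f ≤ ℓ·q^{m−1} such that f(β_i) equals the image of φ(α_i) for every i. -/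
/-!
Over a finite field `F` with `q` elements, the trace of a degree-`m` extension `E` is the
`q`-linearized polynomial `Tr x = ∑_{k < m} x ^ q ^ k`, and the trace form is nondegenerate.
Hence every coordinate function `x ↦ a.repr x j` is `x ↦ Tr (b j * x)` for the trace-dual basis
`b`, i.e. the evaluation of a polynomial of degree at most `q ^ (m - 1)`. Substituting these
coordinate polynomials for the variables of `φ` gives `f`, of degree at most
`totalDegree φ * q ^ (m - 1)`.
-/

open Polynomial

namespace MvPolynomial

theorem totalDegree_map_le {σ R S : Type*} [CommSemiring R] [CommSemiring S] (f : R →+* S)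
    (φ : MvPolynomial σ R) : (map f φ).totalDegree ≤ φ.totalDegree :=
  Finset.sup_mono (support_map_subset f φ)

theorem natDegree_aeval_le_s5 {σ R S : Type*} [CommSemiring R] [CommSemiring S] [Algebra R S]
    (φ : MvPolynomial σ R) {P : σ → S[X]} {d : ℕ} (hP : ∀ i, (P i).natDegree ≤ d) :
    (aeval P φ).natDegree ≤ φ.totalDegree * d := by
  rw [← aeval_map_algebraMap S P φ]
  exact aeval_natDegree_le _ (totalDegree_map_le _ φ) P hP

theorem polynomial_eval_aeval {σ R S : Type*} [CommSemiring R] [CommSemiring S] [Algebra R S]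
    (φ : MvPolynomial σ R) (P : σ → S[X]) (x : S) :
    (aeval P φ).eval x = aeval (fun i => (P i).eval x) φ := by
  simpa using comp_aeval_apply ((Polynomial.aeval x).restrictScalars R) φ (f := P)

end MvPolynomial

namespace FiniteField

variable (F : Type*) {E : Type*} [Field F] [Field E] [Finite E] [Algebra F E]

noncomputable def tracePolynomial (c : E) : E[X] :=
  ∑ i ∈ Finset.range (Module.finrank F E), C (c ^ Nat.card F ^ i) * X ^ Nat.card F ^ i

variable {F}

theorem eval_tracePolynomial (c x : E) :
    (tracePolynomial F c).eval x = algebraMap F E (Algebra.trace F E (c * x)) := by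
  simp [tracePolynomial, algebraMap_trace_eq_sum_pow, eval_finsetSum, mul_pow]

theorem natDegree_tracePolynomial_le (c : E) :
    (tracePolynomial F c).natDegree ≤ Nat.card F ^ (Module.finrank F E - 1) := by
  have : Finite F := Finite.of_injective _ (algebraMap F E).injective
  refine natDegree_sum_le_of_forall_le _ _ fun i hi => ?_
  exact (natDegree_C_mul_X_pow_le _ _).trans <|
    Nat.pow_le_pow_right Nat.card_pos (by rw [Finset.mem_range] at hi; omega)

theorem _root_.Module.Basis.repr_apply_eq_trace_traceDual_mul {ι : Type*} [Finite ι]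
    [DecidableEq ι] (a : Module.Basis ι F E) (x : E) (j : ι) :
    a.repr x j = Algebra.trace F E (a.traceDual j * x) := by
  simpa [mul_comm] using a.traceDual.traceDual_repr_apply x j

theorem exists_natDegree_le_forall_eval_equivFun_symm_eq {ι : Type*} [Fintype ι]
    (a : Module.Basis ι F E) (φ : MvPolynomial ι F) :
    ∃ f : E[X], f.natDegree ≤ φ.totalDegree * Nat.card F ^ (Module.finrank F E - 1) ∧
      ∀ v : ι → F, f.eval (a.equivFun.symm v) = algebraMap F E (MvPolynomial.eval v φ) := by
  classical
  refine ⟨MvPolynomial.aeval (fun j => tracePolynomial F (a.traceDual j)) φ,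
    MvPolynomial.natDegree_aeval_le_s5 φ fun j => natDegree_tracePolynomial_le _, fun v => ?_⟩
  simp_rw [MvPolynomial.polynomial_eval_aeval, eval_tracePolynomial,
    ← a.repr_apply_eq_trace_traceDual_mul, ← a.equivFun_apply, a.equivFun.apply_symm_apply]
  exact MvPolynomial.aeval_algebraMap_apply E v φ

end FiniteField

theorem stmt_5_general {F E : Type*} [Field F] [Fintype F] [Field E] [Fintype E]
    [Algebra F E] (q m ℓ n : ℕ) (hq : Fintype.card F = q)
    (hrank : Module.finrank F E = m)
    (α : Fin n → (Fin m → F)) (hα : Function.Injective α)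
    (a : Module.Basis (Fin m) F E)
    (β : Fin n → E) (hβ : ∀ i, β i = ∑ j, (a j : E) * algebraMap F E (α i j)) :
    Function.Injective β ∧
      ∀ φ : MvPolynomial (Fin m) F, φ.totalDegree ≤ ℓ →
        ∃ f : Polynomial E, f.natDegree ≤ ℓ * q ^ (m - 1) ∧
          ∀ i : Fin n, f.eval (β i) = algebraMap F E (MvPolynomial.eval (α i) φ) := by
  have hβ_eq : β = a.equivFun.symm ∘ α := funext fun i => by
    simp [hβ, Module.Basis.equivFun_symm_apply, Algebra.smul_def, mul_comm]
  refine ⟨hβ_eq ▸ a.equivFun.symm.injective.comp hα, fun φ hφ => ?_⟩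
  obtain ⟨f, hf_deg, hf_eval⟩ :=
    FiniteField.exists_natDegree_le_forall_eval_equivFun_symm_eq a φ
  refine ⟨f, ?_, fun i => hβ_eq ▸ hf_eval (α i)⟩
  rw [Nat.card_eq_fintype_card, hq, hrank] at hf_deg
  exact hf_deg.trans (Nat.mul_le_mul_right _ hφ)

/-- Let `q` be a prime power, `m` a positive integer,
`ℓ ≤ q`, `n ≤ q ^ m`, and let `α 1, ..., α n` be distinct points of `F_q^m`.
Fix a basis `a 1, ..., a m` of `F_{q^m}` (here `E`) over `F_q` (here `F`) and
set `β i = ∑ j, a j * α i j`; the `β i` are then distinct.  Moreover for every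
codeword `[φ(α 1), ..., φ(α n)]` of the Reed-Muller code `RM_q(ℓ, m, n)`, its
coordinatewise image under the embedding `F_q → F_{q^m}` is a codeword of the
Reed-Solomon code `RS_{q^m}(n, ℓ q^{m-1})` with evaluation points
`β 1, ..., β n`: there exists `f ∈ F_{q^m}[X]` with `deg f ≤ ℓ * q ^ (m - 1)`
such that `f (β i)` equals the image of `φ (α i)` for every `i`. -/
theorem stmt_5 {F E : Type*} [Field F] [Fintype F] [Field E] [Fintype E]
    [Algebra F E] (q m ℓ n : ℕ) (hq : Fintype.card F = q) (hm : 0 < m)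
    (hℓ : ℓ ≤ q) (hn : n ≤ q ^ m) (hrank : Module.finrank F E = m)
    (α : Fin n → (Fin m → F)) (hα : Function.Injective α)
    (a : Module.Basis (Fin m) F E)
    (β : Fin n → E) (hβ : ∀ i, β i = ∑ j, (a j : E) * algebraMap F E (α i j)) :
    Function.Injective β ∧
      ∀ φ : MvPolynomial (Fin m) F, φ.totalDegree ≤ ℓ →
        ∃ f : Polynomial E, f.natDegree ≤ ℓ * q ^ (m - 1) ∧
          ∀ i : Fin n, f.eval (β i) = algebraMap F E (MvPolynomial.eval (α i) φ) :=
  stmt_5_general q m ℓ n hq hrank α hα a β hβ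
end

section
/- Let q be a prime power, m a positive integer, ℓ a natural number, n ≤ q^m, and let α_1, ..., α_n be distinct points of F_q^m. Then any two distinct codewords of the Reed-Muller code RM_q(ℓ, m, n) have Hamming distance at least n − ℓ·q^{m−1}. Equivalently, if φ, φ' ∈ F_q[x_1, ..., x_m] are polynomials of total degree at most ℓ whose evaluation vectors at α_1, ..., α_n differ, then the number of indices i with φ(α_i) = φ'(α_i) is at most ℓ·q^{m−1}. -/
open MvPolynomial Finset

lemma sz_aux {F : Type*} [Field F] [Fintype F] [DecidableEq F] :
    ∀ (m : ℕ) (p : MvPolynomial (Fin m) F), p ≠ 0 →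
      (Finset.univ.filter fun x : Fin m → F => eval x p = 0).card * Fintype.card F ≤
        p.totalDegree * Fintype.card F ^ m := by
  intro m
  induction m with
  | zero =>
    intro p hp
    have : (Finset.univ.filter fun x : Fin 0 → F => eval x p = 0) = ∅ := by
      rw [Finset.filter_eq_empty_iff]
      intro x _
      rw [MvPolynomial.eq_C_of_isEmpty p, eval_C]
      intro h
      apply hp
      rw [MvPolynomial.eq_C_of_isEmpty p, h, map_zero]
    rw [this, Finset.card_empty, Nat.zero_mul]
    exact Nat.zero_le _
  | succ m ih =>
    intro p hp
    set f := finSuccEquiv F m p with hf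
    have hf0 : f ≠ 0 := by
      intro h0
      exact hp ((finSuccEquiv F m).injective (by rw [map_zero, ← hf]; exact h0))
    set d := f.natDegree with hd
    set pd := f.coeff d with hpd
    have hpd0 : pd ≠ 0 := Polynomial.leadingCoeff_ne_zero.mpr hf0
    have hDd : pd.totalDegree + d ≤ p.totalDegree :=
      totalDegree_coeff_finSuccEquiv_add_le p d hpd0
    -- rewrite the count as a sum over the tail
    have hcard : (Finset.univ.filter fun x : Fin (m+1) → F => eval x p = 0).card
        = ∑ s : Fin m → F, (Finset.univ.filter fun a : F =>
            Polynomial.eval a (Polynomial.map (eval s) f) = 0).card := by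
      rw [Finset.card_filter]
      rw [← (Fin.consEquiv (fun _ : Fin (m+1) => F)).sum_comp
        (fun x => if eval x p = 0 then 1 else 0)]
      rw [Fintype.sum_prod_type]
      rw [Finset.sum_comm]
      refine Finset.sum_congr rfl fun s _ => ?_
      rw [Finset.card_filter]
      refine Finset.sum_congr rfl fun a _ => ?_
      congr 1
      show ((eval (Fin.cons a s : Fin (m+1) → F)) p = 0) = _
      rw [eval_eq_eval_mv_eval']
    -- pointwise bound
    have hbound : ∀ s : Fin m → F,
        (Finset.univ.filter fun a : F =>
            Polynomial.eval a (Polynomial.map (eval s) f) = 0).card ≤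
          if eval s pd = 0 then Fintype.card F else d := by
      intro s
      split_ifs with hs
      · exact (Finset.card_filter_le _ _).trans (by simp)
      · set g := Polynomial.map (eval s) f with hg
        have hg0 : g ≠ 0 := fun h => hs (by
          have := Polynomial.coeff_map (eval s) d (p := f)
          rw [← hg, h, Polynomial.coeff_zero] at this
          exact this.symm)
        calc (Finset.univ.filter fun a : F => Polynomial.eval a g = 0).card
            ≤ g.roots.toFinset.card := by
              apply Finset.card_le_card
              intro a ha
              simp only [Finset.mem_filter] at ha
              rw [Multiset.mem_toFinset, Polynomial.mem_roots hg0]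
              exact ha.2
          _ ≤ Multiset.card g.roots := Multiset.toFinset_card_le _
          _ ≤ g.natDegree := Polynomial.card_roots' g
          _ ≤ d := Polynomial.natDegree_map_le
    -- sum the bounds
    have hA : ((Finset.univ.filter fun s : Fin m → F => eval s pd = 0).card)
        * Fintype.card F ≤ pd.totalDegree * Fintype.card F ^ m := ih pd hpd0
    have hsum : (Finset.univ.filter fun x : Fin (m+1) → F => eval x p = 0).card ≤
        (Finset.univ.filter fun s : Fin m → F => eval s pd = 0).card * Fintype.card F
          + Fintype.card F ^ m * d := by
      rw [hcard]
      calc ∑ s : Fin m → F, (Finset.univ.filter fun a : F =>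
              Polynomial.eval a (Polynomial.map (eval s) f) = 0).card
          ≤ ∑ s : Fin m → F, (if eval s pd = 0 then Fintype.card F else d) :=
            Finset.sum_le_sum fun s _ => hbound s
        _ = (Finset.univ.filter fun s : Fin m → F => eval s pd = 0).card * Fintype.card F
            + (Finset.univ.filter fun s : Fin m → F => ¬ eval s pd = 0).card * d := by
            rw [Finset.sum_ite, Finset.sum_const, Finset.sum_const, smul_eq_mul, smul_eq_mul]
        _ ≤ _ := by
            gcongr
            calc (Finset.univ.filter fun s : Fin m → F => ¬ eval s pd = 0).card
                ≤ Fintype.card (Fin m → F) := Finset.card_filter_le _ _ |>.trans (by simp)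
              _ = Fintype.card F ^ m := by simp [Fintype.card_fun]
    calc (Finset.univ.filter fun x : Fin (m+1) → F => eval x p = 0).card * Fintype.card F
        ≤ ((Finset.univ.filter fun s : Fin m → F => eval s pd = 0).card * Fintype.card F
            + Fintype.card F ^ m * d) * Fintype.card F := by gcongr
      _ ≤ (pd.totalDegree * Fintype.card F ^ m + Fintype.card F ^ m * d) * Fintype.card F := by
          gcongr
      _ = (pd.totalDegree + d) * Fintype.card F ^ (m + 1) := by ring
      _ ≤ p.totalDegree * Fintype.card F ^ (m + 1) := by gcongr

/-- Let `q` be a prime power, `m` a positive integer, `ℓ` a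
natural number, `n ≤ q ^ m`, and let `α 1, ..., α n` be distinct points of
`F_q^m`.  If `φ, φ' ∈ F_q[x 1, ..., x m]` are polynomials of total degree at
most `ℓ` whose evaluation vectors at `α 1, ..., α n` differ, then the number
of indices `i` with `φ (α i) = φ' (α i)` is at most `ℓ * q ^ (m - 1)`;
equivalently, the Hamming distance of the two codewords is at least
`n - ℓ * q ^ (m - 1)`. -/
theorem stmt_7 {F : Type*} [Field F] [Fintype F] (q m ℓ n : ℕ)
    (hq : Fintype.card F = q) (hm : 0 < m) (hn : n ≤ q ^ m)
    (α : Fin n → (Fin m → F)) (hα : Function.Injective α)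
    (φ φ' : MvPolynomial (Fin m) F)
    (hφ : φ.totalDegree ≤ ℓ) (hφ' : φ'.totalDegree ≤ ℓ)
    (hne : ∃ i : Fin n, MvPolynomial.eval (α i) φ ≠ MvPolynomial.eval (α i) φ') :
    {i : Fin n | MvPolynomial.eval (α i) φ = MvPolynomial.eval (α i) φ'}.ncard ≤
      ℓ * q ^ (m - 1) := by
  classical
  set ψ := φ - φ' with hψdef
  have hψ0 : ψ ≠ 0 := by
    obtain ⟨i, hi⟩ := hne
    intro h
    apply hi
    have h2 := congrArg (eval (α i)) h
    rw [hψdef, map_sub, map_zero] at h2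
    exact sub_eq_zero.mp h2
  have hψdeg : ψ.totalDegree ≤ ℓ := (totalDegree_sub φ φ').trans (max_le hφ hφ')
  have hz := sz_aux m ψ hψ0
  subst hq
  have hqpos : 0 < Fintype.card F := Fintype.card_pos
  have hm' : Fintype.card F ^ m = Fintype.card F ^ (m - 1) * Fintype.card F := by
    rw [← pow_succ, Nat.sub_add_cancel hm]
  have hz2 : (Finset.univ.filter fun x : Fin m → F => eval x ψ = 0).card ≤
      ψ.totalDegree * Fintype.card F ^ (m - 1) := by
    apply Nat.le_of_mul_le_mul_right _ hqpos
    calc (Finset.univ.filter fun x : Fin m → F => eval x ψ = 0).card * Fintype.card F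
        ≤ ψ.totalDegree * Fintype.card F ^ m := hz
      _ = ψ.totalDegree * Fintype.card F ^ (m - 1) * Fintype.card F := by rw [hm', mul_assoc]
  -- relate the agreement set to the zero set via the injective α
  have hsub : α '' {i : Fin n | eval (α i) φ = eval (α i) φ'} ⊆
      ↑(Finset.univ.filter fun x : Fin m → F => eval x ψ = 0) := by
    rintro x ⟨i, hi, rfl⟩
    simp only [Finset.coe_filter, Set.mem_setOf_eq, Finset.mem_univ, true_and]
    rw [hψdef, map_sub, sub_eq_zero]
    exact hi
  calc {i : Fin n | eval (α i) φ = eval (α i) φ'}.ncard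
      = (α '' {i : Fin n | eval (α i) φ = eval (α i) φ'}).ncard :=
        (Set.ncard_image_of_injective _ hα).symm
    _ ≤ (↑(Finset.univ.filter fun x : Fin m → F => eval x ψ = 0) : Set (Fin m → F)).ncard :=
        Set.ncard_le_ncard hsub (Finset.finite_toSet _)
    _ = (Finset.univ.filter fun x : Fin m → F => eval x ψ = 0).card := Set.ncard_coe_finset _
    _ ≤ ψ.totalDegree * Fintype.card F ^ (m - 1) := hz2
    _ ≤ ℓ * Fintype.card F ^ (m - 1) := by gcongr
end

section
/- Let A be a finite alphabet, m a positive integer, and for each i ∈ {1, ..., m} let n_i be a positive integer, C_i a set of words in A^{n_i}, and t_i a natural number. Suppose that for each i there exists a bounded-distance decoder D_i : A^{n_i} → A^{n_i} such that for every codeword c ∈ C_i and every received word r ∈ A^{n_i} with Hamming distance d_H(r, c) ≤ t_i one has D_i(r) = c. Let P be the m-dimensional product code of C_1, ..., C_m: the set of arrays w : ∏_{i=1}^m {1, ..., n_i} → A such that for every axis j and every fixing of the coordinates other than the j-th, the resulting word of length n_j belongs to C_j. Then there exists a decoder D for P such that for every codeword c ∈ P and every array r with Hamming distance d_H(r, c)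 ≤ ∏_{i=1}^m t_i one has D(r) = c. -/
/-- The slab counting lemma: if every axis-`j` line (for `j ∈ s`) through a
point of `Δ` meets `Δ` in at least `d j` points, and `Δ` lies in the slab
through `x₀` along the axes in `s`, then `Δ` has at least `∏ j ∈ s, d j`
elements. -/
lemma aux_slab {m : ℕ} {n : Fin m → ℕ} (d : Fin m → ℕ) (s : Finset (Fin m)) :
    ∀ (Δ : Finset (∀ i, Fin (n i))) (x₀ : ∀ i, Fin (n i)), x₀ ∈ Δ →
      (∀ x ∈ Δ, ∀ i ∉ s, x i = x₀ i) →
      (∀ j ∈ s, ∀ x ∈ Δ, d j ≤ (Finset.univ.filter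
          (fun y : Fin (n j) => Function.update x j y ∈ Δ)).card) →
      ∏ j ∈ s, d j ≤ Δ.card := by
  induction s using Finset.induction with
  | empty =>
    intro Δ x₀ hx₀ _ _
    simpa using Finset.card_pos.2 ⟨x₀, hx₀⟩
  | @insert j s hj ih =>
    intro Δ x₀ hx₀ hslab hline
    set Y : Finset (Fin (n j)) :=
      Finset.univ.filter (fun y => Function.update x₀ j y ∈ Δ) with hYdef
    have hY : d j ≤ Y.card := hline j (Finset.mem_insert_self j s) x₀ hx₀
    set f : Fin (n j) → Finset (∀ i, Fin (n i)) :=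
      fun y => Δ.filter (fun x => x j = y) with hfdef
    have hslice : ∀ y ∈ Y, ∏ j' ∈ s, d j' ≤ (f y).card := by
      intro y hy
      have hy' : Function.update x₀ j y ∈ Δ := by
        simpa [hYdef] using hy
      apply ih (f y) (Function.update x₀ j y)
      · simp [hfdef, Finset.mem_filter, hy']
      · intro x hx i hi
        rcases eq_or_ne i j with rfl | hij
        · simp only [hfdef, Finset.mem_filter] at hx
          simp [hx.2]
        · have : i ∉ insert j s := by simp [hij, hi]
          simp only [hfdef, Finset.mem_filter] at hx
          rw [hslab x hx.1 i this, Function.update_of_ne hij]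
      · intro j' hj' x hx
        have hjj' : j ≠ j' := by rintro rfl; exact hj hj'
        simp only [hfdef, Finset.mem_filter] at hx
        have hfe : (Finset.univ.filter
            (fun y' : Fin (n j') => Function.update x j' y' ∈ f y)) =
            (Finset.univ.filter
            (fun y' : Fin (n j') => Function.update x j' y' ∈ Δ)) := by
          ext y'
          simp only [hfdef, Finset.mem_filter, Finset.mem_univ, true_and]
          constructor
          · exact fun h => h.1
          · intro h
            exact ⟨h, by rw [Function.update_of_ne hjj', hx.2]⟩
        rw [hfe]
        exact hline j' (Finset.mem_insert_of_mem hj') x hx.1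
    have hdisj : ∀ y₁ ∈ Y, ∀ y₂ ∈ Y, y₁ ≠ y₂ → Disjoint (f y₁) (f y₂) := by
      intro y₁ _ y₂ _ hne
      apply Finset.disjoint_left.2
      intro x hx₁ hx₂
      simp only [hfdef, Finset.mem_filter] at hx₁ hx₂
      exact hne (hx₁.2 ▸ hx₂.2 ▸ rfl)
    have hsub : Y.biUnion f ⊆ Δ := by
      intro x hx
      simp only [Finset.mem_biUnion] at hx
      obtain ⟨y, _, hxy⟩ := hx
      exact (Finset.mem_filter.1 hxy).1
    calc ∏ j' ∈ insert j s, d j' = d j * ∏ j' ∈ s, d j' :=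
          Finset.prod_insert hj
      _ ≤ Y.card * ∏ j' ∈ s, d j' := Nat.mul_le_mul_right _ hY
      _ = ∑ _y ∈ Y, ∏ j' ∈ s, d j' := by rw [Finset.sum_const, smul_eq_mul]
      _ ≤ ∑ y ∈ Y, (f y).card := Finset.sum_le_sum hslice
      _ = (Y.biUnion f).card := (Finset.card_biUnion hdisj).symm
      _ ≤ Δ.card := Finset.card_le_card hsub

/-- Existence of a `t`-error-correcting decoder forces minimum distance `> 2t`. -/
lemma comp_dist {k : ℕ} {A : Type*} [DecidableEq A] (Cset : Set (Fin k → A)) (t : ℕ)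
    (D : (Fin k → A) → (Fin k → A))
    (hD : ∀ c ∈ Cset, ∀ r, hammingDist r c ≤ t → D r = c)
    {c c' : Fin k → A} (hc : c ∈ Cset) (hc' : c' ∈ Cset) (hne : c ≠ c') :
    2 * t < hammingDist c c' := by
  by_contra h
  push_neg at h
  set S : Finset (Fin k) := Finset.univ.filter (fun x => c x ≠ c' x) with hSdef
  have hScard : S.card ≤ 2 * t := h
  obtain ⟨S₀, hsub, hcard⟩ := Finset.exists_subset_card_eq
    (min_le_right t S.card : min t S.card ≤ S.card)
  set r : Fin k → A := fun x => if x ∈ S₀ then c' x else c x with hrdef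
  have h1 : hammingDist r c ≤ t := by
    have : (Finset.univ.filter (fun x => r x ≠ c x)) ⊆ S₀ := by
      intro x hx
      simp only [Finset.mem_filter, hrdef] at hx
      by_contra hx0
      simp [hx0] at hx
    calc hammingDist r c ≤ S₀.card := Finset.card_le_card this
      _ ≤ t := hcard ▸ min_le_left _ _
  have h2 : hammingDist r c' ≤ t := by
    have heq : (Finset.univ.filter (fun x => r x ≠ c' x)) ⊆ S \ S₀ := by
      intro x hx
      simp only [Finset.mem_filter, Finset.mem_univ, true_and, hrdef] at hx
      by_cases hx0 : x ∈ S₀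
      · simp [hx0] at hx
      · simp only [hx0, if_false] at hx
        exact Finset.mem_sdiff.2 ⟨by simp [hSdef, hx], hx0⟩
    have : hammingDist r c' ≤ S.card - S₀.card :=
      le_trans (Finset.card_le_card heq) (le_of_eq (Finset.card_sdiff_of_subset hsub))
    omega
  exact hne ((hD c hc r h1).symm.trans (hD c' hc' r h2))

lemma prod_ineq {ι : Type*} [DecidableEq ι] (s : Finset ι) (t : ι → ℕ) :
    s.Nonempty → 2 * ∏ i ∈ s, t i + 1 ≤ ∏ i ∈ s, (2 * t i + 1) := by
  induction s using Finset.induction with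
  | empty => rintro ⟨x, hx⟩; simp at hx
  | @insert j s hj ih =>
    intro _
    rw [Finset.prod_insert hj, Finset.prod_insert hj]
    rcases s.eq_empty_or_nonempty with rfl | hs
    · simp
    · have h1 := ih hs
      have h2 : (2 * t j + 1) * (2 * ∏ i ∈ s, t i + 1) ≤
          (2 * t j + 1) * ∏ i ∈ s, (2 * t i + 1) := Nat.mul_le_mul_left _ h1
      have h3 : 2 * (t j * ∏ i ∈ s, t i) + 1 ≤
          (2 * t j + 1) * (2 * ∏ i ∈ s, t i + 1) := by
        nlinarith [Nat.zero_le (t j * ∏ i ∈ s, t i), Nat.zero_le (t j),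
          Nat.zero_le (∏ i ∈ s, t i)]
      omega

/-- Let `A` be a finite alphabet, `m` a positive integer,
and for each `i` let `n i` be a positive integer, `C i` a set of words in
`A ^ (n i)`, and `t i` a natural number.  Suppose that for each `i` there
exists a bounded-distance decoder `D_i` such that for every codeword
`c ∈ C i` and every received word `r` with `d_H(r, c) ≤ t i` one has
`D_i r = c`.  Let `P` be the `m`-dimensional product code of the `C i`: the
set of arrays `w : (∀ i, Fin (n i)) → A` all of whose axis-`j` sections
(obtained by fixing all coordinates except the `j`-th) lie in `C j`.  Then
there exists a decoder `D` for `P` such that for every codeword `c ∈ P` and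
every array `r` with `d_H(r, c) ≤ ∏ i, t i` one has `D r = c`. -/
theorem stmt_10 {A : Type*} [Fintype A] [DecidableEq A] (m : ℕ) (hm : 0 < m)
    (n : Fin m → ℕ) (hn : ∀ i, 0 < n i)
    (C : ∀ i : Fin m, Set (Fin (n i) → A)) (t : Fin m → ℕ)
    (hdec : ∀ i : Fin m, ∃ D : (Fin (n i) → A) → (Fin (n i) → A),
      ∀ c ∈ C i, ∀ r : Fin (n i) → A, hammingDist r c ≤ t i → D r = c) :
    ∃ D : ((∀ i, Fin (n i)) → A) → ((∀ i, Fin (n i)) → A),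
      ∀ c ∈ {w : (∀ i, Fin (n i)) → A |
          ∀ (j : Fin m) (idx : ∀ i, Fin (n i)),
            (fun y : Fin (n j) => w (Function.update idx j y)) ∈ C j},
        ∀ r : (∀ i, Fin (n i)) → A, hammingDist r c ≤ ∏ i, t i → D r = c := by
  classical
  set P : Set ((∀ i, Fin (n i)) → A) :=
    {w : (∀ i, Fin (n i)) → A |
      ∀ (j : Fin m) (idx : ∀ i, Fin (n i)),
        (fun y : Fin (n j) => w (Function.update idx j y)) ∈ C j} with hPdef
  set T : ℕ := ∏ i, t i with hTdef
  -- minimum distance of the product code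
  have hmin : ∀ c ∈ P, ∀ c' ∈ P, c ≠ c' → 2 * T < hammingDist c c' := by
    intro c hc c' hc' hne
    set Δ : Finset (∀ i, Fin (n i)) :=
      Finset.univ.filter (fun x => c x ≠ c' x) with hΔdef
    obtain ⟨x₀, hx₀⟩ : ∃ x, c x ≠ c' x := by
      by_contra hcon
      push_neg at hcon
      exact hne (funext hcon)
    have hx₀Δ : x₀ ∈ Δ := by simp [hΔdef, hx₀]
    have hline : ∀ j : Fin m, ∀ x ∈ Δ, 2 * t j + 1 ≤ (Finset.univ.filter
        (fun y : Fin (n j) => Function.update x j y ∈ Δ)).card := by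
      intro j x hx
      have hxΔ : c x ≠ c' x := by simpa [hΔdef] using hx
      obtain ⟨Dj, hDj⟩ := hdec j
      have hw : (fun y : Fin (n j) => c (Function.update x j y)) ∈ C j := hc j x
      have hw' : (fun y : Fin (n j) => c' (Function.update x j y)) ∈ C j := hc' j x
      have hwne : (fun y : Fin (n j) => c (Function.update x j y)) ≠
          (fun y : Fin (n j) => c' (Function.update x j y)) := by
        intro hcon
        apply hxΔ
        have := congrFun hcon (x j)
        simpa [Function.update_eq_self] using this
      have hdist := comp_dist (C j) (t j) Dj hDj hw hw' hwne
      have : hammingDist (fun y : Fin (n j) => c (Function.update x j y))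
          (fun y : Fin (n j) => c' (Function.update x j y)) = (Finset.univ.filter
          (fun y : Fin (n j) => Function.update x j y ∈ Δ)).card := by
        unfold hammingDist
        congr 1
        ext y
        simp [hΔdef]
      omega
    have hslab : ∀ x ∈ Δ, ∀ i ∉ (Finset.univ : Finset (Fin m)), x i = x₀ i := by
      intro x _ i hi
      exact absurd (Finset.mem_univ i) hi
    have hbig := aux_slab (fun j => 2 * t j + 1) Finset.univ Δ x₀ hx₀Δ hslab
      (fun j _ x hx => hline j x hx)
    have hprod : 2 * T + 1 ≤ ∏ j, (2 * t j + 1) :=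
      prod_ineq Finset.univ t ⟨⟨0, hm⟩, Finset.mem_univ _⟩
    have hΔcard : hammingDist c c' = Δ.card := rfl
    have hbig' : ∏ j, (2 * t j + 1) ≤ Δ.card := hbig
    omega
  refine ⟨fun r => if h : ∃ c, c ∈ P ∧ hammingDist r c ≤ T then h.choose else r, ?_⟩
  intro c hc r hr
  have hex : ∃ c₀, c₀ ∈ P ∧ hammingDist r c₀ ≤ T := ⟨c, hc, hr⟩
  beta_reduce
  rw [dif_pos hex]
  obtain ⟨hmem, hdist⟩ := hex.choose_spec
  by_contra hne
  have htri : hammingDist hex.choose c ≤ 2 * T := by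
    calc hammingDist hex.choose c ≤ hammingDist hex.choose r + hammingDist r c :=
          hammingDist_triangle _ _ _
      _ ≤ T + T := Nat.add_le_add (by rwa [hammingDist_comm]) hr
      _ = 2 * T := by ring
  exact absurd htri (not_le.2 (hmin hex.choose hmem c hc hne))
end
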